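/- The invariant Inv is preserved by internal steps: if an extended state s' satisfies Inv(s') and (s', t') is a NextI' step, then t' satisfies Inv(t'). -/

import Mathlib

open scoped Classical

universe u v

/-- A state of an explicit real-time system: a non-clock component and the clock values. -/
structure RTState (α : Type u) (𝒳 : Type v) where
  core : α
  clk : 𝒳 → ℕ

/-- An extended state: an underlying state together with the mapped-clock values. -/
structure RTEState (α : Type u) (𝒳 : Type v) where
  st : RTState α 𝒳
  m : 𝒳 → ℕ

namespace RT

variable {α : Type u} {𝒳 : Type v}

/-- `T x d s`: the state agreeing with `s` except that clock `x` has value `d`. -/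
noncomputable def T (x : 𝒳) (d : ℕ) (s : RTState α 𝒳) : RTState α 𝒳 :=
  ⟨s.core, fun y => if y = x then d else s.clk y⟩

/-- `𝒯^x_d` applied pointwise to a behavior. -/
noncomputable def Tb (x : 𝒳) (d : ℕ) (σ : ℕ → RTState α 𝒳) : ℕ → RTState α 𝒳 :=
  fun i => T x d (σ i)

/-- `N_S`: behaviors each of whose steps is a `NextI` step or a stuttering step. -/
def NS (NextI : RTState α 𝒳 → RTState α 𝒳 → Prop) : Set (ℕ → RTState α 𝒳) :=
  { σ | ∀ i, NextI (σ i) (σ (i + 1)) ∨ σ (i + 1) = σ i }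

/-- `AdvanceTime_S`: all clocks advance by one, provided no time bound is hit. -/
def AdvanceTimeS (B : 𝒳 → RTState α 𝒳 → Set ℕ) (s t : RTState α 𝒳) : Prop :=
  t.core = s.core ∧ (∀ x, t.clk x = s.clk x + 1) ∧ ∀ x, s.clk x ∉ B x s

/-- `ETP^x(s)`: points in time at which a newly possible behavior for state `s` exists. -/
def ETP (NextI : RTState α 𝒳 → RTState α 𝒳 → Prop) (x : 𝒳) (s : RTState α 𝒳) :
    Set ℕ :=
  { t | 1 ≤ t ∧ ∃ σ ∈ NS NextI, σ 0 = T x t s ∧ Tb x (t - 1) σ ∉ NS NextI }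

/-- `AdvanceTime_Ŝ`: the time-optimized advance-time action. -/
def AdvanceTimeHat (B relETP : 𝒳 → RTState α 𝒳 → Set ℕ) (s t : RTState α 𝒳) : Prop :=
  t.core = s.core ∧ (∃ x, s.clk x < t.clk x) ∧
    (∀ x, t.clk x = s.clk x ∨ (s.clk x < t.clk x ∧ t.clk x ∈ relETP x s)) ∧
    ∀ x, ∀ b ∈ B x s, s.clk x ≤ b → t.clk x ≤ b

/-- `Init'`: initial extended states, with mapped clocks equal to the clocks. -/
def EInit (Init : Set (RTState α 𝒳)) : Set (RTEState α 𝒳) :=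
  { s' | s'.st ∈ Init ∧ ∀ x, s'.m x = s'.st.clk x }

/-- `NextI'`: internal step of the extended system, mapped clocks unchanged. -/
def ENextI (NextI : RTState α 𝒳 → RTState α 𝒳 → Prop) (s' t' : RTEState α 𝒳) : Prop :=
  NextI s'.st t'.st ∧ ∀ x, t'.m x = s'.m x

/-- `AdvanceTime'`: extended advance-time step, updating the mapped clocks. -/
def EAdvanceTime (B relETP : 𝒳 → RTState α 𝒳 → Set ℕ) (s' t' : RTEState α 𝒳) : Prop :=
  AdvanceTimeS B s'.st t'.st ∧
    ∀ x, t'.m x = sSup ({s'.m x} ∪ { n ∈ relETP x s'.st | n ≤ t'.st.clk x })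

/-- `T'^x_d`: set clock `x` of the underlying state to `d`; mapped clocks unchanged. -/
noncomputable def ET (x : 𝒳) (d : ℕ) (s' : RTEState α 𝒳) : RTEState α 𝒳 :=
  ⟨T x d s'.st, s'.m⟩

/-- `𝒯'^x_d` applied pointwise to a behavior of extended states. -/
noncomputable def ETb (x : 𝒳) (d : ℕ) (σ : ℕ → RTEState α 𝒳) : ℕ → RTEState α 𝒳 :=
  fun i => ET x d (σ i)

/-- `N_{S'}`: extended behaviors in which every step is a `NextI'` step or stuttering. -/
def ENS (NextI : RTState α 𝒳 → RTState α 𝒳 → Prop) : Set (ℕ → RTEState α 𝒳) :=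
  { σ | ∀ i, ENextI NextI (σ i) (σ (i + 1)) ∨ σ (i + 1) = σ i }

/-- `n^x(s')`, an element of `ℕ∞` (`sInf ∅ = ⊤`), with truncated subtraction on `ℕ`. -/
noncomputable def nfun (NextI : RTState α 𝒳 → RTState α 𝒳 → Prop) (x : 𝒳)
    (s' : RTEState α 𝒳) : ℕ∞ :=
  sInf ((fun n : ℕ => (n : ℕ∞)) ''
    { n : ℕ | ∃ σ ∈ ENS NextI, σ 0 = ET x (s'.st.clk x - n) s' ∧
        ETb x (s'.st.clk x - n - 1) σ ∉ ENS NextI })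

/-- The invariant `Inv`: `s'.x ≤ s'.m^x + n^x(s')` in `ℕ∞` for every clock `x`. -/
def Inv (NextI : RTState α 𝒳 → RTState α 𝒳 → Prop) (s' : RTEState α 𝒳) : Prop :=
  ∀ x, (s'.st.clk x : ℕ∞) ≤ (s'.m x : ℕ∞) + nfun NextI x s'

/-- `bar(s')`: the state with the core of `st s'` and every clock set to its mapped value. -/
def bar (s' : RTEState α 𝒳) : RTState α 𝒳 :=
  ⟨s'.st.core, s'.m⟩

/-- A step of the extended system: `NextI'`, `AdvanceTime'`, or stuttering. -/
def EStep (NextI : RTState α 𝒳 → RTState α 𝒳 → Prop)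
    (B relETP : 𝒳 → RTState α 𝒳 → Set ℕ) (s' t' : RTEState α 𝒳) : Prop :=
  ENextI NextI s' t' ∨ EAdvanceTime B relETP s' t' ∨ t' = s'

/-- An extended state is reachable iff it arises from `Init'` by finitely many steps. -/
def EReachable (Init : Set (RTState α 𝒳)) (NextI : RTState α 𝒳 → RTState α 𝒳 → Prop)
    (B relETP : 𝒳 → RTState α 𝒳 → Set ℕ) (s' : RTEState α 𝒳) : Prop :=
  ∃ i ∈ EInit Init, Relation.ReflTransGen (EStep NextI B relETP) i s'

/-- Replace the values of the clocks in the set `Y` by their mapped-clock values. -/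
noncomputable def replaceClocks (Y : Set 𝒳) (s' : RTEState α 𝒳) : RTEState α 𝒳 :=
  ⟨⟨s'.st.core, fun x => if x ∈ Y then s'.m x else s'.st.clk x⟩, s'.m⟩

end RT

/-!
An internal step leaves the clocks and mapped clocks unchanged, so it suffices to show
`n^x(s') ≤ n^x(t')`. Let `c = s'.x = t'.x` and let `σ` witness the value `n` for `t'`. If the
step `T'^x_{c-n}(s') → T'^x_{c-n}(t')` is allowed, prefixing `σ` with `T'^x_{c-n}(s')` witnesses
`n` for `s'`. Otherwise, since the unshifted step `s' → t'` is allowed, there is a last `j < n`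
for which the shifted step `T'^x_{c-j}(s') → T'^x_{c-j}(t')` is allowed, and the two-state
behavior made of it witnesses `j` for `s'`: moving clock `x` back by one more forbids its
first step.
-/

theorem Nat.exists_lt_and_not_succ_of_not {P : ℕ → Prop} {n : ℕ} (h0 : P 0) (hn : ¬P n) :
    ∃ j < n, P j ∧ ¬P (j + 1) := by
  induction n with
  | zero => exact absurd h0 hn
  | succ n ih =>
    by_cases h : P n
    · exact ⟨n, n.lt_add_one, h, hn⟩
    · obtain ⟨j, hj, hPj⟩ := ih h
      exact ⟨j, hj.trans n.lt_add_one, hPj⟩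

namespace RT

variable {α : Type u} {𝒳 : Type v}

theorem T_T (x : 𝒳) (d e : ℕ) (s : RTState α 𝒳) : T x d (T x e s) = T x d s := by
  simp only [T, RTState.mk.injEq, true_and]
  funext y
  split_ifs <;> rfl

theorem T_clk_self (x : 𝒳) (s : RTState α 𝒳) : T x (s.clk x) s = s := by
  simp only [T]
  congr
  funext y
  split_ifs with h <;> simp [h]

theorem ET_ET (x : 𝒳) (d e : ℕ) (s' : RTEState α 𝒳) : ET x d (ET x e s') = ET x d s' := by
  simp only [ET, T_T]

theorem ET_clk_self (x : 𝒳) (s' : RTEState α 𝒳) : ET x (s'.st.clk x) s' = s' := by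
  simp only [ET, T_clk_self]

def cons {β : Type*} (u : β) (σ : ℕ → β) : ℕ → β
  | 0 => u
  | i + 1 => σ i

theorem ETb_cons (x : 𝒳) (d : ℕ) (u : RTEState α 𝒳) (σ : ℕ → RTEState α 𝒳) :
    ETb x d (cons u σ) = cons (ET x d u) (ETb x d σ) := by
  funext i
  cases i <;> rfl

def ENextIOrStutter (NextI : RTState α 𝒳 → RTState α 𝒳 → Prop) (u v : RTEState α 𝒳) : Prop :=
  ENextI NextI u v ∨ v = u

section

variable {NextI : RTState α 𝒳 → RTState α 𝒳 → Prop}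

theorem cons_mem_ENS_iff {u : RTEState α 𝒳} {σ : ℕ → RTEState α 𝒳} :
    cons u σ ∈ ENS NextI ↔ ENextIOrStutter NextI u (σ 0) ∧ σ ∈ ENS NextI :=
  ⟨fun h => ⟨h 0, fun i => h (i + 1)⟩, fun ⟨h0, h⟩ i => by cases i; exacts [h0, h _]⟩

theorem const_mem_ENS (v : RTEState α 𝒳) : (fun _ => v) ∈ ENS NextI :=
  fun _ => Or.inr rfl

theorem nfun_le {x : 𝒳} {s' : RTEState α 𝒳} {n : ℕ} {σ : ℕ → RTEState α 𝒳}
    (hσ : σ ∈ ENS NextI) (hσ0 : σ 0 = ET x (s'.st.clk x - n) s')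
    (hfail : ETb x (s'.st.clk x - n - 1) σ ∉ ENS NextI) : nfun NextI x s' ≤ n :=
  sInf_le ⟨n, ⟨σ, hσ, hσ0, hfail⟩, rfl⟩

theorem nfun_le_of_cons {x : 𝒳} {s' : RTEState α 𝒳} {n : ℕ} {σ : ℕ → RTEState α 𝒳}
    (hσ : σ ∈ ENS NextI) (hstep : ENextIOrStutter NextI (ET x (s'.st.clk x - n) s') (σ 0))
    (hfail : ETb x (s'.st.clk x - n - 1) σ ∉ ENS NextI) : nfun NextI x s' ≤ n := by
  refine nfun_le (σ := cons _ σ) (cons_mem_ENS_iff.2 ⟨hstep, hσ⟩) rfl ?_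
  rw [ETb_cons, cons_mem_ENS_iff]
  exact fun h => hfail h.2

theorem nfun_le_of_step {x : 𝒳} {s' v : RTEState α 𝒳} {j : ℕ}
    (hstep : ENextIOrStutter NextI (ET x (s'.st.clk x - j) s') v)
    (hfail : ¬ENextIOrStutter NextI (ET x (s'.st.clk x - j - 1) s')
      (ET x (s'.st.clk x - j - 1) v)) :
    nfun NextI x s' ≤ j := by
  refine nfun_le (σ := cons _ fun _ => v) (cons_mem_ENS_iff.2 ⟨hstep, const_mem_ENS v⟩) rfl ?_
  rw [ETb_cons, cons_mem_ENS_iff, ET_ET]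
  exact fun h => hfail h.1

theorem nfun_le_nfun_of_ENextI (hClk : ∀ s t, NextI s t → ∀ x, t.clk x = s.clk x)
    {s' t' : RTEState α 𝒳} (h : ENextI NextI s' t') (x : 𝒳) :
    nfun NextI x s' ≤ nfun NextI x t' := by
  have hc : t'.st.clk x = s'.st.clk x := hClk _ _ h.1 x
  refine le_sInf ?_
  rintro _ ⟨n, ⟨σ, hσ, hσ0, hfail⟩, rfl⟩
  rw [hc] at hσ0 hfail
  let P k := ENextIOrStutter NextI (ET x (s'.st.clk x - k) s') (ET x (s'.st.clk x - k) t')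
  by_cases hn : P n
  · exact nfun_le_of_cons hσ (hσ0 ▸ hn) hfail
  have hP0 : P 0 := by
    simp only [P, Nat.sub_zero]
    rw [ET_clk_self x s', ← hc, ET_clk_self]
    exact Or.inl h
  obtain ⟨j, hjn, hj, hj1⟩ := Nat.exists_lt_and_not_succ_of_not hP0 hn
  calc nfun NextI x s' ≤ j := nfun_le_of_step hj (by rwa [ET_ET, Nat.sub_sub])
    _ ≤ n := by exact_mod_cast hjn.le

end

end RT

theorem inv_preserved_by_internal_step {α : Type u} {𝒳 : Type v}
    (NextI : RTState α 𝒳 → RTState α 𝒳 → Prop)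
    (hClk : ∀ s t, NextI s t → ∀ x, t.clk x = s.clk x)
    (s' t' : RTEState α 𝒳) (hInv : RT.Inv NextI s')
    (h : RT.ENextI NextI s' t') :
    RT.Inv NextI t' := by
  intro x
  rw [hClk _ _ h.1 x, h.2 x]
  exact (hInv x).trans (add_le_add_right (RT.nfun_le_nfun_of_ENextI hClk h x) _)
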